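/- arXiv:1405.5163 — 5 statements merged into one kernel-verified Lean document; each statement's English description precedes it below -/
import Mathlib

section
/- The function ω defined implicitly by r_s/r = ω^(1/2)(1-ω) for ω near 1 has the asymptotic expansion ω = 1 - (r_s/r) - (1/2)(r_s/r)^2 - (5/8)(r_s/r)^3 - (r_s/r)^4 + O((r_s/r)^5) as r_s/r → 0. -/
open Real Set Filter Asymptotics

set_option maxHeartbeats 2000000 in
/-- The branch ω of the solution of x = √ω(1-ω) with ω → 1 as x → 0⁺ (x = r_s/r)
has the asymptotic expansion ω = 1 - x - x²/2 - (5/8)x³ - x⁴ + O(x⁵). -/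
theorem stmt_5 (ω : ℝ → ℝ) (ε : ℝ) (hε : 0 < ε)
    (heq : ∀ x ∈ Ioo (0 : ℝ) ε, x = Real.sqrt (ω x) * (1 - ω x))
    (hlim : Tendsto ω (nhdsWithin 0 (Ioi 0)) (nhds 1)) :
    (fun x => ω x - (1 - x - (1/2) * x ^ 2 - (5/8) * x ^ 3 - x ^ 4))
      =O[nhdsWithin 0 (Ioi 0)] fun x => x ^ 5 := by
  rw [isBigO_iff]
  refine ⟨15, ?_⟩
  have hmem : Ioo (0:ℝ) (min ε (1/10)) ∈ nhdsWithin (0:ℝ) (Ioi 0) :=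
    Ioo_mem_nhdsGT_of_mem ⟨le_refl 0, by positivity⟩
  have hωmem : ∀ᶠ x in nhdsWithin (0:ℝ) (Ioi 0), ω x ∈ Icc (9/10:ℝ) (11/10) :=
    hlim (Icc_mem_nhds (by norm_num) (by norm_num))
  filter_upwards [hmem, hωmem] with x hx hω
  obtain ⟨hx0, hxm⟩ := hx
  have hxε : x < ε := lt_of_lt_of_le hxm (min_le_left _ _)
  have hx10 : x ≤ 1/10 := le_of_lt (lt_of_lt_of_le hxm (min_le_right _ _))
  obtain ⟨hω9, hω11⟩ := hω
  have hx2 : x ^ 2 ≤ 1/100 := by nlinarith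
  have hx3 : x ^ 3 ≤ 1/1000 := by nlinarith
  have hx4 : x ^ 4 ≤ 1/10000 := by nlinarith
  have hx5 : x ^ 5 ≤ 1/100000 := by nlinarith
  have hx6 : x ^ 6 ≤ 1/1000000 := by nlinarith
  obtain ⟨P, hP⟩ : ∃ P : ℝ, P = 1 - x - (1/2) * x ^ 2 - (5/8) * x ^ 3 - x ^ 4 := ⟨_, rfl⟩
  rw [show (1 : ℝ) - x - (1/2) * x ^ 2 - (5/8) * x ^ 3 - x ^ 4 = P from hP.symm]
  have hP89 : (89/100 : ℝ) ≤ P := by rw [hP]; linarith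
  have hP1 : P ≤ 1 := by rw [hP]; nlinarith [pow_pos hx0 2, pow_pos hx0 3, pow_pos hx0 4]
  have h1P : x ≤ 1 - P := by rw [hP]; nlinarith [pow_pos hx0 2, pow_pos hx0 3, pow_pos hx0 4]
  obtain ⟨s, hs⟩ : ∃ s : ℝ, s = Real.sqrt (ω x) := ⟨_, rfl⟩
  obtain ⟨t, htd⟩ : ∃ t : ℝ, t = Real.sqrt P := ⟨_, rfl⟩
  have hs0 : 0 ≤ s := hs ▸ Real.sqrt_nonneg _
  have ht0 : 0 ≤ t := htd ▸ Real.sqrt_nonneg _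
  have hs2 : s ^ 2 = ω x := by rw [hs]; exact Real.sq_sqrt (by linarith)
  have ht2 : t ^ 2 = P := by rw [htd]; exact Real.sq_sqrt (by linarith)
  have sqrt81 : Real.sqrt (81/100) = 9/10 := by
    rw [show (81/100:ℝ) = (9/10)^2 by norm_num, Real.sqrt_sq (by norm_num)]
  have hs9 : (9/10 : ℝ) ≤ s := by
    rw [hs, ← sqrt81]; exact Real.sqrt_le_sqrt (by linarith)
  have hs11 : s ≤ (11/10 : ℝ) := by
    rw [hs, show (11/10:ℝ) = Real.sqrt ((11/10)^2) from (Real.sqrt_sq (by norm_num)).symm]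
    exact Real.sqrt_le_sqrt (by nlinarith)
  have ht9 : (9/10 : ℝ) ≤ t := by
    rw [htd, ← sqrt81]; exact Real.sqrt_le_sqrt (by linarith)
  have ht1 : t ≤ 1 := by
    rw [htd, show (1:ℝ) = Real.sqrt 1 from Real.sqrt_one.symm]
    exact Real.sqrt_le_sqrt (by linarith)
  have hxe : x = s * (1 - ω x) := hs ▸ heq x ⟨hx0, hxε⟩
  rw [← hs2] at hxe
  obtain ⟨B, hB⟩ : ∃ B : ℝ, B = t * (1 - P) := ⟨_, rfl⟩
  have hB0 : 0 ≤ B := by rw [hB]; apply mul_nonneg ht0; linarith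
  -- key identity
  have key : (ω x - P) * (s ^ 2 + s * t + t ^ 2 - 1) = (B - x) * (s + t) := by
    rw [← hs2, ← ht2, hB, ← ht2, hxe]; ring
  have hst81 : (81/100 : ℝ) ≤ s * t := by
    calc (81/100 : ℝ) = (9/10) * (9/10) := by norm_num
      _ ≤ s * t := mul_le_mul hs9 ht9 (by norm_num) hs0
  have hD : (1 : ℝ) ≤ s ^ 2 + s * t + t ^ 2 - 1 := by
    rw [hs2, ht2]; linarith
  -- bound on x - B
  have hB2 : B ^ 2 = P * (1 - P) ^ 2 := by rw [hB, mul_pow, ht2]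
  have hpoly : x ^ 2 - P * (1 - P) ^ 2 =
      x ^ 6 * (231/64 + 217/64 * x + 523/128 * x ^ 2 + 2621/512 * x ^ 3
        + 171/64 * x ^ 4 + 15/8 * x ^ 5 + x ^ 6) := by
    rw [hP]; ring
  have hgb : (231/64 : ℝ) + 217/64 * x + 523/128 * x ^ 2 + 2621/512 * x ^ 3
        + 171/64 * x ^ 4 + 15/8 * x ^ 5 + x ^ 6 ≤ 5 := by linarith
  have hg0 : (0:ℝ) ≤ x ^ 2 - B ^ 2 := by rw [hB2, hpoly]; positivity
  have hg5 : x ^ 2 - B ^ 2 ≤ 5 * x ^ 6 := by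
    rw [hB2, hpoly]
    calc x ^ 6 * (231/64 + 217/64 * x + 523/128 * x ^ 2 + 2621/512 * x ^ 3
        + 171/64 * x ^ 4 + 15/8 * x ^ 5 + x ^ 6) ≤ x ^ 6 * 5 :=
          mul_le_mul_of_nonneg_left hgb (by positivity)
      _ = 5 * x ^ 6 := by ring
  have hxB : 0 ≤ x - B := by
    have hB2x : B ^ 2 ≤ x ^ 2 := by linarith
    have := (pow_le_pow_iff_left₀ hB0 (le_of_lt hx0) two_ne_zero).mp hB2x
    linarith
  have hxB5 : x - B ≤ 5 * x ^ 5 := by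
    have h1 : (x - B) * x ≤ 5 * x ^ 5 * x := by
      calc (x - B) * x ≤ (x - B) * (x + B) :=
            mul_le_mul_of_nonneg_left (by linarith) (by linarith)
        _ = x ^ 2 - B ^ 2 := by ring
        _ ≤ 5 * x ^ 6 := hg5
        _ = 5 * x ^ 5 * x := by ring
    exact le_of_mul_le_mul_right h1 hx0
  -- conclude
  have hst : (x - B) * (s + t) ≤ (x - B) * 3 :=
    mul_le_mul_of_nonneg_left (by linarith) hxB
  have h2 : (B - x) * (s + t) ≤ 0 := by
    have h3 : 0 ≤ (x - B) * (s + t) := mul_nonneg hxB (by linarith)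
    calc (B - x) * (s + t) = -((x - B) * (s + t)) := by ring
      _ ≤ 0 := by linarith
  have hE0 : ω x - P ≤ 0 := by
    by_contra h
    push_neg at h
    have h4 := mul_pos h (lt_of_lt_of_le one_pos hD)
    linarith [key]
  have h4 : (x - B) * (s + t) ≤ 15 * x ^ 5 := by
    calc (x - B) * (s + t) ≤ (x - B) * 3 := hst
      _ ≤ 5 * x ^ 5 * 3 := by linarith
      _ = 15 * x ^ 5 := by ring
  have h5 : (-(ω x - P)) * (s ^ 2 + s * t + t ^ 2 - 1) ≤ 15 * x ^ 5 := by
    calc (-(ω x - P)) * (s ^ 2 + s * t + t ^ 2 - 1)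
        = -((ω x - P) * (s ^ 2 + s * t + t ^ 2 - 1)) := by ring
      _ = -((B - x) * (s + t)) := by rw [key]
      _ = (x - B) * (s + t) := by ring
      _ ≤ 15 * x ^ 5 := h4
  have h6 : -(ω x - P) ≤ (-(ω x - P)) * (s ^ 2 + s * t + t ^ 2 - 1) :=
    le_mul_of_one_le_right (neg_nonneg.mpr hE0) hD
  have hfin : -(ω x - P) ≤ 15 * x ^ 5 := by linarith
  calc |ω x - P| = -(ω x - P) := abs_of_nonpos hE0
    _ ≤ 15 * x ^ 5 := hfin
    _ = 15 * |x ^ 5| := by rw [abs_of_pos (pow_pos hx0 5)]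
end

section
/- With ω the branch of the solution of r_s/r = ω^(1/2)(1-ω) with ω → 1 as r_s/r → 0, the function e^λ = (2ω/(3ω-1))^2 has the expansion 1 + (r_s/r) + (9/4)(r_s/r)^2 + (43/8)(r_s/r)^3 + (211/16)(r_s/r)^4 + O((r_s/r)^5). -/
open Real Set Filter Asymptotics Topology

/-!
Parametrize by `s = √ω`, so that `x = s (1 - s²)` and `e^λ = (2s² / (3s² - 1))²`. The
difference between `e^λ` and its degree-4 Taylor polynomial in `x` is a rational function of `s`
whose numerator is divisible by `(1 - s)⁵`; dividing out `x⁵ = s⁵ (1 - s)⁵ (1 + s)⁵` leaves a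
rational function `expansionRemainder s` that is regular at `s = 1`. As `ω → 1`, also `s → 1`,
so this factor stays bounded.
-/

noncomputable def expansionRemainder (s : ℝ) : ℝ :=
  (-1 - 6*s - (65/4)*s^2 - (237/8)*s^3 - (653/16)*s^4 - (127/16)*s^5
    + (3677/16)*s^6 + (12799/16)*s^7 + (21381/16)*s^8 + (19623/16)*s^9
    + (9495/16)*s^10 + (1899/16)*s^11)
  / (s^5 * (1+s)^5 * (3*s^2-1)^2)

theorem continuousAt_expansionRemainder_one : ContinuousAt expansionRemainder 1 := by
  unfold expansionRemainder
  exact ContinuousAt.div (by fun_prop) (by fun_prop) (by norm_num)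

theorem sq_div_sub_expansion_eq {w x : ℝ} (hw : 0 < w) (h3 : 3 * w - 1 ≠ 0)
    (hx : x = √w * (1 - w)) :
    (2 * w / (3 * w - 1)) ^ 2 - (1 + x + (9/4) * x ^ 2 + (43/8) * x ^ 3 + (211/16) * x ^ 4)
      = x ^ 5 * expansionRemainder √w := by
  obtain ⟨s, hs, rfl⟩ : ∃ s, 0 < s ∧ w = s ^ 2 := ⟨√w, sqrt_pos.2 hw, (sq_sqrt hw.le).symm⟩
  rw [sqrt_sq hs.le] at hx ⊢
  subst hx
  unfold expansionRemainder
  rw [div_pow, div_sub' (pow_ne_zero 2 h3), mul_div_assoc',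
    div_eq_div_iff (pow_ne_zero 2 h3) (by positivity)]
  ring

/-- With ω the branch of x = √ω(1-ω) with ω → 1 as x = r_s/r → 0⁺, the function
e^λ = (2ω/(3ω-1))² has the expansion
1 + x + (9/4)x² + (43/8)x³ + (211/16)x⁴ + O(x⁵). -/
theorem stmt_6 (ω : ℝ → ℝ) (ε : ℝ) (hε : 0 < ε)
    (heq : ∀ x ∈ Ioo (0 : ℝ) ε, x = Real.sqrt (ω x) * (1 - ω x))
    (hlim : Tendsto ω (nhdsWithin 0 (Ioi 0)) (nhds 1)) :
    (fun x => (2 * ω x / (3 * ω x - 1)) ^ 2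
        - (1 + x + (9/4) * x ^ 2 + (43/8) * x ^ 3 + (211/16) * x ^ 4))
      =O[nhdsWithin 0 (Ioi 0)] fun x => x ^ 5 := by
  have hsqrt : Tendsto (fun x => √(ω x)) (𝓝[>] 0) (𝓝 1) := by simpa using hlim.sqrt
  have hrem : (fun x => x ^ 5 * expansionRemainder √(ω x)) =O[𝓝[>] 0] fun x => x ^ 5 := by
    simpa using (isBigO_refl (fun x : ℝ => x ^ 5) _).mul
      ((continuousAt_expansionRemainder_one.tendsto.comp hsqrt).isBigO_one ℝ)
  refine hrem.congr' ?_ EventuallyEq.rfl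
  filter_upwards [Ioo_mem_nhdsGT hε, hlim (Ioi_mem_nhds (by norm_num : (1/3 : ℝ) < 1))]
    with x hx (hω : 1/3 < ω x)
  exact (sq_div_sub_expansion_eq (by linarith) (by linarith) (heq x hx)).symm
end

section
/- If ω is differentiable and positive and satisfies r·ω'(r) = -2ω(Aω-1)/(3Aω-1), then ((d/dr)(r ω^(1/2)))^2/(Aω) = A(2ω/(3Aω-1))^2. -/
open Real Set

lemma HasDerivAt.id_mul_sqrt {f : ℝ → ℝ} {f' r : ℝ} (hf : HasDerivAt f f' r) (hpos : 0 < f r) :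
    HasDerivAt (fun x => x * √(f x)) (√(f r) + r * f' / (2 * √(f r))) r := by
  have h : HasDerivAt (fun x => x * √(f x)) (1 * √(f r) + r * (f' / (2 * √(f r)))) r :=
    (hasDerivAt_id' r).mul (hf.sqrt hpos.ne')
  rwa [one_mul, ← mul_div_assoc] at h

/-- With `w = ω r` and `d = r ω'(r)`, the left side is `(r √ω)'` at `r`. -/
lemma sqrt_add_div_eq_of_ode {A w d : ℝ} (hw : 0 < w) (h3 : 3 * A * w - 1 ≠ 0)
    (hode : d = -2 * w * (A * w - 1) / (3 * A * w - 1)) :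
    √w + d / (2 * √w) = 2 * A * w * √w / (3 * A * w - 1) := by
  have hs : √w ≠ 0 := (sqrt_pos.mpr hw).ne'
  have hsq : √w ^ 2 = w := sq_sqrt hw.le
  have hode' : d * (3 * A * w - 1) = -2 * w * (A * w - 1) := by
    rw [hode, div_mul_cancel₀ _ h3]
  rw [eq_div_iff h3]
  field_simp
  linear_combination hode' + 2 * (A * w - 1) * hsq

theorem stmt_8_general (A a b r : ℝ) (ω : ℝ → ℝ) (hA : 0 < A)
    (hr : r ∈ Ioo a b)
    (hdiff : DifferentiableOn ℝ ω (Ioo a b))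
    (hpos : ∀ x ∈ Ioo a b, 0 < ω x)
    (h3 : 3 * A * ω r - 1 ≠ 0)
    (hode : r * deriv ω r = -2 * ω r * (A * ω r - 1) / (3 * A * ω r - 1)) :
    (deriv (fun x => x * Real.sqrt (ω x)) r) ^ 2 / (A * ω r)
      = A * (2 * ω r / (3 * A * ω r - 1)) ^ 2 := by
  have hωr : 0 < ω r := hpos r hr
  have hω' : HasDerivAt ω (deriv ω r) r :=
    (hdiff.differentiableAt (isOpen_Ioo.mem_nhds hr)).hasDerivAt
  rw [(hω'.id_mul_sqrt hωr).deriv, sqrt_add_div_eq_of_ode hωr h3 hode,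
    div_pow, mul_pow, sq_sqrt hωr.le]
  field_simp

/-- If ω is differentiable and positive and satisfies
r·ω'(r) = -2ω(Aω-1)/(3Aω-1) (with A > 0 and 3Aω-1 ≠ 0), then
((d/dr)(r·√ω))²/(Aω) = A·(2ω/(3Aω-1))². -/
theorem stmt_8 (A a b r : ℝ) (ω : ℝ → ℝ) (hA : 0 < A) (ha : 0 < a)
    (hr : r ∈ Ioo a b)
    (hdiff : DifferentiableOn ℝ ω (Ioo a b))
    (hpos : ∀ x ∈ Ioo a b, 0 < ω x)
    (h3 : 3 * A * ω r - 1 ≠ 0)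
    (hode : r * deriv ω r = -2 * ω r * (A * ω r - 1) / (3 * A * ω r - 1)) :
    (deriv (fun x => x * Real.sqrt (ω x)) r) ^ 2 / (A * ω r)
      = A * (2 * ω r / (3 * A * ω r - 1)) ^ 2 :=
  stmt_8_general A a b r ω hA hr hdiff hpos h3 hode
end

section
/- Suppose A > 3 and D = (A-3)/2 > 0. Then for the branch defined by D(r_s/r) = ω^(1/2)(Aω - 1) with ω ≥ 1/3, as r → 0+ we have ω(r) → ∞, and moreover ω(r) · (Ar/(D r_s))^(2/3) → 1. -/
open Real Set Filter Topology

/-!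
Writing `c = D r_s / r`, the branch equation reads `c = √ω (Aω - 1)`, which can be solved for the
scale: `ω (A / c)^(2/3) = (Aω / (Aω - 1))^(2/3)`. The right-hand side is at least `1`, so
`ω ≥ (c / A)^(2/3) → ∞`; once `ω → ∞` it tends to `1`.
-/

lemma mul_rpow_two_thirds_div_sqrt_mul_sub_one {A w : ℝ} (hw : 0 < w) (hAw : 1 < A * w) :
    w * (A / (√w * (A * w - 1))) ^ ((2 : ℝ) / 3) = (A * w / (A * w - 1)) ^ ((2 : ℝ) / 3) := by
  set s := √w
  have hs : 0 < s := sqrt_pos.mpr hw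
  have hsw : s ^ 2 = w := sq_sqrt hw.le
  have hA : 0 < A := pos_of_mul_pos_left (one_pos.trans hAw) hw.le
  -- `w = s^2 = (s^3)^(2/3)`, so both factors on the left combine under one power.
  have hw_rpow : w = (s ^ 3) ^ ((2 : ℝ) / 3) := by
    rw [← rpow_natCast, ← rpow_mul hs.le, ← hsw, ← rpow_natCast]
    norm_num
  nth_rw 1 [hw_rpow]
  rw [← mul_rpow (by positivity) (div_nonneg hA.le (by positivity))]
  congr 1
  rw [← hsw]
  field_simp

lemma one_le_rpow_div_sub_one {t p : ℝ} (ht : 1 < t) (hp : 0 ≤ p) : 1 ≤ (t / (t - 1)) ^ p :=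
  one_le_rpow ((one_le_div (by linarith)).mpr (by linarith)) hp

lemma tendsto_div_sub_one_atTop : Tendsto (fun t : ℝ => t / (t - 1)) atTop (𝓝 1) := by
  have h : Tendsto (fun t : ℝ => 1 + (t - 1)⁻¹) atTop (𝓝 (1 + 0)) :=
    tendsto_const_nhds.add
      (tendsto_inv_atTop_zero.comp (tendsto_atTop_add_const_right _ _ tendsto_id))
  rw [add_zero] at h
  refine h.congr' ?_
  filter_upwards [eventually_gt_atTop 1] with t ht
  have : t - 1 ≠ 0 := by linarith
  field_simp
  ring

lemma tendsto_mul_rpow_neg_nhdsGT_zero {k y : ℝ} (hk : 0 < k) (hy : y < 0) :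
    Tendsto (fun r => (k * r) ^ y) (𝓝[>] 0) atTop := by
  refine (tendsto_rpow_neg_nhdsGT_zero hy).comp ?_
  refine tendsto_nhdsWithin_of_tendsto_nhds_of_eventually_within _ ?_ ?_
  · simpa using ((continuous_const_mul k).tendsto 0).mono_left nhdsWithin_le_nhds
  · filter_upwards [self_mem_nhdsWithin] with r (hr : 0 < r)
    exact mul_pos hk hr

lemma mul_rpow_two_thirds_of_branch {A D r_s r w : ℝ} (hw : 0 < w)
    (hAw : 1 < A * w) (hbranch : D * (r_s / r) = √w * (A * w - 1)) :
    w * (A * r / (D * r_s)) ^ ((2 : ℝ) / 3) = (A * w / (A * w - 1)) ^ ((2 : ℝ) / 3) := by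
  have hscale : A * r / (D * r_s) = A / (D * (r_s / r)) := by
    rw [mul_div_assoc', div_div_eq_mul_div, mul_comm A r]
  rw [hscale, hbranch]
  exact mul_rpow_two_thirds_div_sqrt_mul_sub_one hw hAw

/-- For A > 3, D = (A-3)/2 > 0, r_s > 0, and ω the branch of
D·(r_s/r) = √ω(Aω-1) with ω ≥ 1/3 on (0, (3√3/2)r_s]:
as r → 0⁺, ω(r) → ∞ and ω(r)·(A·r/(D·r_s))^(2/3) → 1. -/
theorem stmt_10 (A D r_s : ℝ) (ω : ℝ → ℝ) (hA : 3 < A) (hD : D = (A - 3) / 2)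
    (hrs : 0 < r_s)
    (hbranch : ∀ r ∈ Ioc (0 : ℝ) (3 * Real.sqrt 3 / 2 * r_s),
      D * (r_s / r) = Real.sqrt (ω r) * (A * ω r - 1) ∧ 1/3 ≤ ω r) :
    Tendsto ω (nhdsWithin 0 (Ioi 0)) atTop ∧
    Tendsto (fun r => ω r * (A * r / (D * r_s)) ^ ((2 : ℝ)/3))
      (nhdsWithin 0 (Ioi 0)) (nhds 1) := by
  have hk : 0 < A / (D * r_s) := by
    have : 0 < D := by rw [hD]; linarith
    have : 0 < A := by linarith
    positivity
  have hscaled : ∀ᶠ r in 𝓝[>] 0, 1 < A * ω r ∧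
      ω r * (A * r / (D * r_s)) ^ ((2 : ℝ) / 3) = (A * ω r / (A * ω r - 1)) ^ ((2 : ℝ) / 3) := by
    have hR : (0 : ℝ) < 3 * √3 / 2 * r_s := by positivity
    filter_upwards [Ioo_mem_nhdsGT hR] with r ⟨hr, hrR⟩
    obtain ⟨heq, hω⟩ := hbranch r ⟨hr, hrR.le⟩
    have hAω : 1 < A * ω r := by nlinarith
    exact ⟨hAω, mul_rpow_two_thirds_of_branch (by linarith) hAω heq⟩
  have hω_atTop : Tendsto ω (𝓝[>] 0) atTop := by
    refine tendsto_atTop_mono' _ ?_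
      (tendsto_mul_rpow_neg_nhdsGT_zero hk (by norm_num : -(2 : ℝ) / 3 < 0))
    filter_upwards [hscaled, self_mem_nhdsWithin] with r ⟨hAω, hid⟩ (hr : 0 < r)
    have hx : 0 < (A / (D * r_s) * r) ^ ((2 : ℝ) / 3) := by positivity
    rw [neg_div, rpow_neg (by positivity), inv_le_iff_one_le_mul₀ hx, ← mul_div_right_comm, hid]
    exact one_le_rpow_div_sub_one hAω (by norm_num)
  refine ⟨hω_atTop, ?_⟩
  have hlim := (tendsto_div_sub_one_atTop.comp
    (hω_atTop.const_mul_atTop (by linarith : (0 : ℝ) < A))).rpow_const (p := (2 : ℝ) / 3) (by simp)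
  rw [one_rpow] at hlim
  exact hlim.congr' (hscaled.mono fun r h => h.2.symm)
end

section
/- If λ satisfies e^(-λ(r)) = 1 + B/r and ν' = -λ', then e^(ν(r)) = (1/A)(1 + B/r) for some constant A > 0, and this pair (ν, λ) satisfies the third field equation 2ν' - 2λ' + 2rν'' + r(ν')² - rν'λ' = 0. -/
open Real Set

/-!
Taking logarithms, `λ = -ℓ` with `ℓ r = log (1 + B / r)`, so `ν' = -λ' = ℓ'` and `ν - ℓ` is
constant on the interval; exponentiating gives the first claim. For the field equation write
`f = 1 + B / r = e^ℓ`: then `ℓ' = f' / f` and `ℓ'' + ℓ'² = f'' / f`, so the equation reduces to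
`2 f' + r f'' = 0`, which holds because `r² f' = -B` is constant.
-/

section SchwarzschildLog

variable {B x : ℝ}

lemma mul_add_ne_zero_of_one_add_div_ne_zero (hx : x ≠ 0) (hB : 1 + B / x ≠ 0) :
    x * (x + B) ≠ 0 := by
  rw [show x + B = x * (1 + B / x) by rw [mul_one_add, mul_div_cancel₀ _ hx]]
  exact mul_ne_zero hx (mul_ne_zero hx hB)

lemma hasDerivAt_log_one_add_div (hx : x ≠ 0) (hB : 1 + B / x ≠ 0) :
    HasDerivAt (fun r => log (1 + B / r)) (-B / (x * (x + B))) x := by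
  have hf : HasDerivAt (fun r => 1 + B / r) (-B / x ^ 2) x := by
    simpa [div_eq_mul_inv, neg_div] using ((hasDerivAt_inv hx).const_mul B).const_add 1
  convert hf.log hB using 1
  field_simp

lemma hasDerivAt_neg_div_mul_add (hx : x * (x + B) ≠ 0) :
    HasDerivAt (fun r => -B / (r * (r + B))) (B * (2 * x + B) / (x * (x + B)) ^ 2) x := by
  have hq : HasDerivAt (fun r => r * (r + B)) (2 * x + B) x :=
    ((hasDerivAt_id' x).mul ((hasDerivAt_id' x).add_const B)).congr_deriv (by ring)
  exact ((hasDerivAt_const x (-B)).div hq hx).congr_deriv (by ring)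

lemma hasDerivAt_of_exp_neg_eq {s : Set ℝ} {lam : ℝ → ℝ} (hs : IsOpen s)
    (hlam : ∀ r ∈ s, exp (-lam r) = 1 + B / r) (hxs : x ∈ s) (hx : x ≠ 0) :
    HasDerivAt lam (B / (x * (x + B))) x := by
  have hEq : lam =ᶠ[nhds x] fun r => -log (1 + B / r) := by
    filter_upwards [hs.mem_nhds hxs] with r hr
    rw [← hlam r hr, log_exp, neg_neg]
  have hpos : 1 + B / x ≠ 0 := hlam x hxs ▸ (exp_pos _).ne'
  exact ((hasDerivAt_log_one_add_div hx hpos).neg.congr_of_eventuallyEq hEq).congr_deriv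
    (by rw [neg_div, neg_neg])

end SchwarzschildLog

theorem stmt_17_general (B a b : ℝ) (lam ν : ℝ → ℝ) (ha : 0 < a)
    (hlam : ∀ r ∈ Ioo a b, Real.exp (-lam r) = 1 + B / r)
    (hν2 : ContDiffOn ℝ 2 ν (Ioo a b))
    (hprime : ∀ r ∈ Ioo a b, deriv ν r = -deriv lam r) :
    (∃ A : ℝ, 0 < A ∧ ∀ r ∈ Ioo a b, Real.exp (ν r) = (1 / A) * (1 + B / r)) ∧
    ∀ r ∈ Ioo a b,
      2 * deriv ν r - 2 * deriv lam r + 2 * r * deriv (deriv ν) r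
        + r * (deriv ν r) ^ 2 - r * deriv ν r * deriv lam r = 0 := by
  have hr0 : ∀ r ∈ Ioo a b, r ≠ 0 := fun r hr => (ha.trans hr.1).ne'
  have hpos : ∀ r ∈ Ioo a b, 0 < 1 + B / r := fun r hr => hlam r hr ▸ exp_pos _
  have hrB : ∀ r ∈ Ioo a b, r * (r + B) ≠ 0 := fun r hr =>
    mul_add_ne_zero_of_one_add_div_ne_zero (hr0 r hr) (hpos r hr).ne'
  have hlam' : ∀ r ∈ Ioo a b, deriv lam r = B / (r * (r + B)) := fun r hr =>
    (hasDerivAt_of_exp_neg_eq isOpen_Ioo hlam hr (hr0 r hr)).deriv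
  have hℓ : ∀ r ∈ Ioo a b, HasDerivAt (fun r => log (1 + B / r)) (-B / (r * (r + B))) r :=
    fun r hr => hasDerivAt_log_one_add_div (hr0 r hr) (hpos r hr).ne'
  have hν' : EqOn (deriv ν) (fun r => -B / (r * (r + B))) (Ioo a b) := fun r hr => by
    rw [hprime r hr, hlam' r hr]
    exact (neg_div _ _).symm
  have hν'' : ∀ r ∈ Ioo a b, deriv (deriv ν) r = B * (2 * r + B) / (r * (r + B)) ^ 2 :=
    fun r hr => ((hasDerivAt_neg_div_mul_add (hrB r hr)).congr_of_eventuallyEq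
      (Filter.eventuallyEq_of_mem (isOpen_Ioo.mem_nhds hr) hν')).deriv
  obtain ⟨c, hc⟩ := isOpen_Ioo.exists_eq_add_of_deriv_eq isPreconnected_Ioo
    (hν2.differentiableOn two_ne_zero)
    (fun r hr => (hℓ r hr).differentiableAt.differentiableWithinAt)
    (fun r hr => (hν' hr).trans (hℓ r hr).deriv.symm)
  refine ⟨⟨exp (-c), exp_pos _, fun r hr => ?_⟩, fun r hr => ?_⟩
  · rw [hc hr, exp_add, exp_log (hpos r hr), exp_neg, one_div, inv_inv]
    ring
  · rw [hν' hr, hlam' r hr, hν'' r hr]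
    have := hrB r hr
    field_simp
    ring

/-- If e^(-λ(r)) = 1 + B/r on an interval (a,b) of positive reals where
1 + B/r > 0, and ν' = -λ' with ν, λ twice differentiable, then
e^(ν(r)) = (1/A)(1 + B/r) for some constant A > 0, and (ν, λ) satisfies the
third field equation 2ν' - 2λ' + 2rν'' + r(ν')² - rν'λ' = 0. -/
theorem stmt_17 (B a b : ℝ) (lam ν : ℝ → ℝ) (ha : 0 < a) (hab : a < b)
    (hposB : ∀ r ∈ Ioo a b, 0 < 1 + B / r)
    (hlam : ∀ r ∈ Ioo a b, Real.exp (-lam r) = 1 + B / r)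
    (hν2 : ContDiffOn ℝ 2 ν (Ioo a b))
    (hlam2 : ContDiffOn ℝ 2 lam (Ioo a b))
    (hprime : ∀ r ∈ Ioo a b, deriv ν r = -deriv lam r) :
    (∃ A : ℝ, 0 < A ∧ ∀ r ∈ Ioo a b, Real.exp (ν r) = (1 / A) * (1 + B / r)) ∧
    ∀ r ∈ Ioo a b,
      2 * deriv ν r - 2 * deriv lam r + 2 * r * deriv (deriv ν) r
        + r * (deriv ν r) ^ 2 - r * deriv ν r * deriv lam r = 0 :=
  stmt_17_general B a b lam ν ha hlam hν2 hprime
end
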